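/- arXiv:0802.0578 — 2 statements merged into one kernel-verified Lean document; each statement's English description precedes it below -/
import Mathlib

section
/- Let N ≥ 3, and suppose for bounded measurable k on S^{N−1}, σ ∈ ℝ with 2σ + N − 2 < 2 and 2σ + N − 2 > 0, ψ : S^{N−1} → ℝ continuous positive, and φ continuous on ℝ^N\{0} with limits c_∞ := lim_{|x|→∞} φ(x)/(|x|^{−σ−N+2} ψ(x/|x|)) ∈ (0,∞) and φ(x) ≤ C|x|^σ/(1+|x|^{2σ+N−2}). Then with φ_μ(x) = μ^{−(N−2)/2} φ(x/μ), for any a ≠ 0: ∫ k((x−a)/|x−a|)/|x−a|² φ_μ(x)² dx = μ^{2σ+N−2} [ c_∞² ∫ k(x/|x|) ψ((x+a)/|x+a|)² / (|x|² |x+a|^{2(σ+N−2)}) dx + o(1) ] as μ → 0⁺. -/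
/-!
Writing `t = σ + N - 2`, the integrand is `μ^{2σ+N-2}` times `w(x) G(x/μ)²`, with weight
`w(x) = k((x-a)/|x-a|) |x-a|⁻² |x|^{-2t}` and profile `G(y) = φ(y) |y|^t`. The bound on `φ`
makes `G` bounded, and the definition of `c_∞` gives `G(x/μ) → c_∞ ψ(x/|x|)` for `x ≠ 0`.
The weight is integrable: its singularities at `0` and `a` have orders `2t < N` and `2 < N`,
and at infinity it decays like `|x|^{-(2t+2)}` with `2t + 2 > N`. Dominated convergence gives
the limit, and the translation `x ↦ x + a` puts it in the stated form.
-/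

open MeasureTheory Filter Set Metric Module
open scoped Topology

section PowerSingularities

variable {E : Type*} [NormedAddCommGroup E] [NormedSpace ℝ E] [FiniteDimensional ℝ E]
  [MeasurableSpace E] [BorelSpace E] {μ : Measure E} [μ.IsAddHaarMeasure]

lemma integrable_of_norm_le_rpow_of_norm_le_rpow (hd : 1 ≤ finrank ℝ E) {f : E → ℝ}
    {C p s : ℝ} (hp : p < finrank ℝ E) (hs : (finrank ℝ E : ℝ) < s)
    (hf : AEStronglyMeasurable f μ) (h_zero : ∀ᵐ x ∂μ, ‖f x‖ ≤ C * ‖x‖ ^ (-p))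
    (h_infty : ∀ᵐ x ∂μ, ‖f x‖ ≤ C * ‖x‖ ^ (-s)) :
    Integrable f μ := by
  have hs0 : 0 ≤ s := le_trans (by positivity) hs.le
  rw [← integrableOn_univ, ← union_compl_self (ball (0 : E) 1)]
  refine (integrableOn_ball_of_norm_le_rpow hd hp (ae_restrict_of_ae h_zero) hf).union ?_
  refine ((integrable_one_add_norm hs).const_mul (C * 2 ^ s)).integrableOn.mono' hf.restrict ?_
  filter_upwards [ae_restrict_mem measurableSet_ball.compl, ae_restrict_of_ae h_infty]
    with x hx hfx
  have hx1 : 1 ≤ ‖x‖ := by simpa using hx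
  have hC : 0 ≤ C :=
    (mul_nonneg_iff_of_pos_right (by positivity)).1 ((norm_nonneg _).trans hfx)
  have h_tail : ‖x‖ ^ (-s) ≤ 2 ^ s * (1 + ‖x‖) ^ (-s) := by
    rw [Real.rpow_neg (norm_nonneg _), Real.rpow_neg (by positivity),
      ← Real.inv_rpow (norm_nonneg _), ← Real.inv_rpow (by positivity),
      ← Real.mul_rpow (by norm_num) (by positivity)]
    refine Real.rpow_le_rpow (by positivity) ?_ hs0
    rw [← div_eq_mul_inv, inv_eq_one_div, div_le_div_iff₀ (by positivity) (by positivity)]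
    linarith
  calc ‖f x‖ ≤ C * ‖x‖ ^ (-s) := hfx
    _ ≤ C * 2 ^ s * (1 + ‖x‖) ^ (-s) := by rw [mul_assoc]; gcongr

lemma integrable_norm_rpow_mul_max_rpow (hd : 1 ≤ finrank ℝ E) {p q c : ℝ} (hc : 0 < c)
    (hp : p < finrank ℝ E) (hpq : (finrank ℝ E : ℝ) < p + q) (hq : 0 ≤ q) :
    Integrable (fun x : E => ‖x‖ ^ (-p) * max ‖x‖ c ^ (-q)) μ := by
  have : Nontrivial E := Module.nontrivial_of_finrank_pos (R := ℝ) hd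
  refine integrable_of_norm_le_rpow_of_norm_le_rpow (C := max (c ^ (-q)) 1) hd hp hpq
    (by fun_prop) ?_ ?_
  all_goals
    filter_upwards [Measure.ae_ne μ 0] with x hx
    have hx0 : 0 < ‖x‖ := norm_pos_iff.2 hx
    rw [Real.norm_eq_abs, abs_of_nonneg (by positivity)]
  · calc ‖x‖ ^ (-p) * max ‖x‖ c ^ (-q) ≤ ‖x‖ ^ (-p) * c ^ (-q) :=
          mul_le_mul_of_nonneg_left
            (Real.rpow_le_rpow_of_nonpos hc (le_max_right _ _) (neg_nonpos.2 hq)) (by positivity)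
      _ ≤ max (c ^ (-q)) 1 * ‖x‖ ^ (-p) := by
          rw [mul_comm]; gcongr; exact le_max_left _ _
  · calc ‖x‖ ^ (-p) * max ‖x‖ c ^ (-q) ≤ ‖x‖ ^ (-p) * ‖x‖ ^ (-q) :=
          mul_le_mul_of_nonneg_left
            (Real.rpow_le_rpow_of_nonpos hx0 (le_max_left _ _) (neg_nonpos.2 hq)) (by positivity)
      _ = 1 * ‖x‖ ^ (-(p + q)) := by rw [one_mul, neg_add, Real.rpow_add hx0]
      _ ≤ max (c ^ (-q)) 1 * ‖x‖ ^ (-(p + q)) := by gcongr; exact le_max_right _ _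

/-- Where `‖x‖ ≤ ‖x - a‖` we have `‖x - a‖ ≥ max ‖x‖ (‖a‖ / 2)`, and symmetrically, so the
function is dominated by the sum of a radial function and a translate of another. -/
lemma integrable_norm_rpow_mul_norm_sub_rpow (hd : 1 ≤ finrank ℝ E) {a : E} (ha : a ≠ 0)
    {p q : ℝ} (hp : p < finrank ℝ E) (hq : q < finrank ℝ E) (hpq : (finrank ℝ E : ℝ) < p + q) :
    Integrable (fun x : E => ‖x‖ ^ (-p) * ‖x - a‖ ^ (-q)) μ := by
  have hc : 0 < ‖a‖ / 2 := by positivity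
  have h_near_zero := integrable_norm_rpow_mul_max_rpow (μ := μ) hd hc hp hpq (by linarith)
  have h_near_a := (integrable_norm_rpow_mul_max_rpow (μ := μ) (p := q) (q := p) hd hc hq
    (by linarith) (by linarith)).comp_sub_right a
  refine (h_near_zero.add h_near_a).mono' (by fun_prop) (ae_of_all _ fun x => ?_)
  have h_far : ‖a‖ ≤ ‖x‖ + ‖x - a‖ := by simpa using norm_sub_le x (x - a)
  have hx : 0 ≤ ‖x‖ ^ (-p) * max ‖x‖ (‖a‖ / 2) ^ (-q) := by positivity
  have hxa : 0 ≤ ‖x - a‖ ^ (-q) * max ‖x - a‖ (‖a‖ / 2) ^ (-p) := by positivity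
  rw [Real.norm_eq_abs, abs_of_nonneg (by positivity), Pi.add_apply]
  rcases le_total ‖x‖ ‖x - a‖ with h | h
  · have : ‖x - a‖ ^ (-q) ≤ max ‖x‖ (‖a‖ / 2) ^ (-q) := Real.rpow_le_rpow_of_nonpos
      (lt_max_of_lt_right hc) (max_le h (by linarith)) (by linarith)
    nlinarith [Real.rpow_nonneg (norm_nonneg x) (-p)]
  · have : ‖x‖ ^ (-p) ≤ max ‖x - a‖ (‖a‖ / 2) ^ (-p) := Real.rpow_le_rpow_of_nonpos
      (lt_max_of_lt_right hc) (max_le h (by linarith)) (by linarith)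
    nlinarith [Real.rpow_nonneg (norm_nonneg (x - a)) (-q)]

lemma integrable_div_norm_sub_sq_mul_norm_rpow (hd : 2 < finrank ℝ E) {a : E} (ha : a ≠ 0)
    {g : E → ℝ} {M p : ℝ} (hg : AEStronglyMeasurable g μ) (hgM : ∀ x, |g x| ≤ M)
    (hp : p < finrank ℝ E) (hp2 : (finrank ℝ E : ℝ) < p + 2) :
    Integrable (fun x => g x / ‖x - a‖ ^ 2 * ‖x‖ ^ (-p)) μ := by
  refine ((integrable_norm_rpow_mul_norm_sub_rpow (μ := μ) (by omega) ha hp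
    (by exact_mod_cast hd) hp2).bdd_mul hg (ae_of_all _ hgM)).congr (ae_of_all _ fun x => ?_)
  simp only [Real.rpow_neg (norm_nonneg _), Real.rpow_two]
  ring

end PowerSingularities

lemma tendsto_integral_mul_of_tendsto_of_abs_le {α ι : Type*} [MeasurableSpace α]
    {ν : Measure α} {l : Filter ι} [l.IsCountablyGenerated] {w L : α → ℝ} {f : ι → α → ℝ}
    {C : ℝ} (hw : Integrable w ν) (hf : ∀ i, AEStronglyMeasurable (f i) ν)
    (hfC : ∀ i x, |f i x| ≤ C) (hlim : ∀ᵐ x ∂ν, Tendsto (fun i => f i x) l (𝓝 (L x))) :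
    Tendsto (fun i => ∫ x, w x * f i x ∂ν) l (𝓝 (∫ x, w x * L x ∂ν)) := by
  refine tendsto_integral_filter_of_dominated_convergence (fun x => ‖w x‖ * C)
    (Eventually.of_forall fun i => hw.aestronglyMeasurable.mul (hf i))
    (Eventually.of_forall fun i => ae_of_all _ fun x => ?_) (hw.norm.mul_const C) ?_
  · rw [norm_mul, Real.norm_eq_abs (f i x)]
    exact mul_le_mul_of_nonneg_left (hfC i x) (norm_nonneg _)
  · filter_upwards [hlim] with x hx using hx.const_mul (w x)

lemma abs_mul_norm_rpow_le {E : Type*} [NormedAddCommGroup E] {φ : E → ℝ} {C σ s t : ℝ}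
    (hC : 0 ≤ C) (ht : 0 < t) (hst : σ + t = s)
    (hbound : ∀ y, y ≠ 0 → |φ y| ≤ C * (‖y‖ ^ σ / (1 + ‖y‖ ^ s))) (y : E) :
    |φ y * ‖y‖ ^ t| ≤ C := by
  rcases eq_or_ne y 0 with rfl | hy
  · simp [Real.zero_rpow ht.ne', hC]
  have hy0 : 0 < ‖y‖ := norm_pos_iff.2 hy
  calc |φ y * ‖y‖ ^ t|
      = |φ y| * ‖y‖ ^ t := by rw [abs_mul, abs_of_nonneg (Real.rpow_nonneg (norm_nonneg _) _)]
    _ ≤ C * (‖y‖ ^ σ / (1 + ‖y‖ ^ s)) * ‖y‖ ^ t := by gcongr; exact hbound y hy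
    _ ≤ C * (‖y‖ ^ σ / ‖y‖ ^ s) * ‖y‖ ^ t := by gcongr; linarith
    _ = C := by rw [← hst, Real.rpow_add hy0]; field_simp

lemma exists_eq_rpow_mul_add_of_tendsto {F J : ℝ → ℝ} {L s : ℝ}
    (hJ : Tendsto J (𝓝[>] 0) (𝓝 L)) (hF : ∀ μ, 0 < μ → F μ = μ ^ s * J μ) :
    ∃ o : ℝ → ℝ, Tendsto o (𝓝[>] 0) (𝓝 0) ∧ ∀ μ, 0 < μ → F μ = μ ^ s * (L + o μ) := by
  refine ⟨fun μ => J μ - L, by simpa using hJ.sub_const L, fun μ hμ => ?_⟩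
  rw [hF μ hμ, add_sub_cancel]

section Rescaling

variable {E : Type*} [NormedAddCommGroup E] [NormedSpace ℝ E]

lemma tendsto_inv_smul_nhdsGT_zero_comap_norm {x : E} (hx : x ≠ 0) :
    Tendsto (fun μ : ℝ => μ⁻¹ • x) (𝓝[>] 0) (comap norm atTop) := by
  rw [tendsto_comap_iff]
  refine (tendsto_inv_nhdsGT_zero.atTop_mul_const (norm_pos_iff.2 hx)).congr' ?_
  filter_upwards [self_mem_nhdsWithin] with μ (hμ : 0 < μ)
  simp [norm_smul, abs_of_pos hμ]

lemma inv_norm_smul_inv_smul {μ : ℝ} (hμ : 0 < μ) (x : E) :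
    ‖μ⁻¹ • x‖⁻¹ • μ⁻¹ • x = ‖x‖⁻¹ • x := by
  rw [norm_smul, Real.norm_of_nonneg (inv_nonneg.2 hμ.le), smul_smul, mul_inv, inv_inv,
    mul_right_comm, mul_inv_cancel₀ hμ.ne', one_mul]

lemma tendsto_mul_norm_rpow_inv_smul {φ ψ : E → ℝ} {t c : ℝ}
    (hlim : Tendsto (fun y => φ y / (‖y‖ ^ (-t) * ψ (‖y‖⁻¹ • y))) (comap norm atTop) (𝓝 c))
    {x : E} (hx : x ≠ 0) (hψ : ψ (‖x‖⁻¹ • x) ≠ 0) :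
    Tendsto (fun μ : ℝ => φ (μ⁻¹ • x) * ‖μ⁻¹ • x‖ ^ t) (𝓝[>] 0) (𝓝 (c * ψ (‖x‖⁻¹ • x))) := by
  refine ((hlim.comp (tendsto_inv_smul_nhdsGT_zero_comap_norm hx)).mul_const _).congr' ?_
  filter_upwards [self_mem_nhdsWithin] with μ (hμ : 0 < μ)
  rw [Function.comp_apply, inv_norm_smul_inv_smul hμ, Real.rpow_neg (norm_nonneg _), ← div_div,
    div_inv_eq_mul, div_mul_cancel₀ _ hψ]

lemma sq_rpow_neg_div_two_eq {μ d s t : ℝ} (hμ : 0 < μ) (hdst : s - 2 * t = -d) {x : E}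
    (hx : x ≠ 0) : (μ ^ (-d / 2)) ^ 2 = μ ^ s * (‖x‖ ^ (-(2 * t)) * (‖μ⁻¹ • x‖ ^ t) ^ 2) := by
  have hx0 : 0 < ‖x‖ := norm_pos_iff.2 hx
  rw [norm_smul, Real.norm_of_nonneg (inv_nonneg.2 hμ.le), Real.mul_rpow (inv_nonneg.2 hμ.le)
    hx0.le, Real.inv_rpow hμ.le, ← Real.rpow_natCast, ← Real.rpow_mul hμ.le,
    show -d / 2 * ((2 : ℕ) : ℝ) = s - t - t by push_cast; linarith, Real.rpow_sub hμ,
    Real.rpow_sub hμ, Real.rpow_neg hx0.le, two_mul, Real.rpow_add hx0]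
  field_simp

end Rescaling

theorem stmt9_general {N : ℕ} (hN : 3 ≤ N) (σ : ℝ)
    (hσ1 : 0 < 2 * σ + (N : ℝ) - 2) (hσ2 : 2 * σ + (N : ℝ) - 2 < 2)
    (a : EuclideanSpace ℝ (Fin N)) (ha : a ≠ 0)
    (k ψ φ : EuclideanSpace ℝ (Fin N) → ℝ)
    (M : ℝ) (hk : ∀ x, |k x| ≤ M) (hkm : Measurable k)
    (hψpos : ∀ x : EuclideanSpace ℝ (Fin N), ‖x‖ = 1 → 0 < ψ x)
    (hφcont : ContinuousOn φ {(0 : EuclideanSpace ℝ (Fin N))}ᶜ)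
    (C : ℝ) (hC : 0 < C)
    (hbound : ∀ x : EuclideanSpace ℝ (Fin N), x ≠ 0 →
      |φ x| ≤ C * (‖x‖ ^ σ / (1 + ‖x‖ ^ (2 * σ + (N : ℝ) - 2))))
    (cinf : ℝ)
    (hlim : Tendsto
      (fun x : EuclideanSpace ℝ (Fin N) =>
        φ x / (‖x‖ ^ (-σ - (N : ℝ) + 2) * ψ (‖x‖⁻¹ • x)))
      (Filter.comap norm Filter.atTop) (𝓝 cinf)) :
    ∃ o : ℝ → ℝ, Tendsto o (𝓝[>] 0) (𝓝 0) ∧ ∀ μ : ℝ, 0 < μ →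
      (∫ x, k (‖x - a‖⁻¹ • (x - a)) / ‖x - a‖ ^ 2
          * (μ ^ (-((N : ℝ) - 2) / 2) * φ (μ⁻¹ • x)) ^ 2)
        = μ ^ (2 * σ + (N : ℝ) - 2) *
          (cinf ^ 2 *
            (∫ x, k (‖x‖⁻¹ • x) * (ψ (‖x + a‖⁻¹ • (x + a))) ^ 2
              / (‖x‖ ^ 2 * ‖x + a‖ ^ (2 * (σ + (N : ℝ) - 2))))
            + o μ) := by
  set t : ℝ := σ + N - 2
  have hN' : (3 : ℝ) ≤ N := by exact_mod_cast hN
  have hdim : finrank ℝ (EuclideanSpace ℝ (Fin N)) = N := finrank_euclideanSpace_fin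
  have : Nontrivial (EuclideanSpace ℝ (Fin N)) :=
    Module.nontrivial_of_finrank_pos (R := ℝ) (by omega)
  set G : EuclideanSpace ℝ (Fin N) → ℝ := fun y => φ y * ‖y‖ ^ t
  set w : EuclideanSpace ℝ (Fin N) → ℝ := fun x =>
    k (‖x - a‖⁻¹ • (x - a)) / ‖x - a‖ ^ 2 * ‖x‖ ^ (-(2 * t))
  have hw : Integrable w := integrable_div_norm_sub_sq_mul_norm_rpow (by omega) ha
    (hkm.comp (f := fun x => ‖x - a‖⁻¹ • (x - a)) (by fun_prop)).aestronglyMeasurable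
    (fun x => hk _) (by rw [hdim]; linarith) (by rw [hdim]; linarith)
  have hG : ∀ y, |G y| ≤ C := abs_mul_norm_rpow_le hC.le (by linarith) (by ring) hbound
  have hGm : Measurable G :=
    (measurable_of_continuousOn_compl_singleton 0 hφcont).mul (by fun_prop)
  have hlimit : ∫ x, w x * (cinf * ψ (‖x‖⁻¹ • x)) ^ 2 = cinf ^ 2 *
      ∫ x, k (‖x‖⁻¹ • x) * (ψ (‖x + a‖⁻¹ • (x + a))) ^ 2
        / (‖x‖ ^ 2 * ‖x + a‖ ^ (2 * (σ + (N : ℝ) - 2))) := by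
    rw [← integral_add_right_eq_self _ a, ← integral_const_mul]
    congr 1 with x
    simp only [w, add_sub_cancel_right, Real.rpow_neg (norm_nonneg _)]
    ring
  rw [show -σ - (N : ℝ) + 2 = -t by ring] at hlim
  refine exists_eq_rpow_mul_add_of_tendsto (J := fun μ => ∫ x, w x * G (μ⁻¹ • x) ^ 2)
    (hlimit ▸ tendsto_integral_mul_of_tendsto_of_abs_le hw
      (fun μ => ((hGm.comp (measurable_const_smul μ⁻¹)).pow_const 2).aestronglyMeasurable)
      (fun μ x => by rw [abs_pow]; exact pow_le_pow_left₀ (abs_nonneg _) (hG _) 2) ?_)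
    fun μ hμ => ?_
  · rw [← integral_const_mul]
    refine integral_congr_ae ?_
    filter_upwards [Measure.ae_ne volume 0] with x hx
    rw [mul_pow, sq_rpow_neg_div_two_eq (s := 2 * σ + N - 2) (t := t) hμ (by ring) hx]
    simp only [w, G]
    ring
  · filter_upwards [Measure.ae_ne volume 0] with x hx
    exact (tendsto_mul_norm_rpow_inv_smul hlim hx (hψpos _ (norm_smul_inv_norm hx)).ne').pow 2

theorem stmt9 {N : ℕ} (hN : 3 ≤ N) (σ : ℝ)
    (hσ1 : 0 < 2 * σ + (N : ℝ) - 2) (hσ2 : 2 * σ + (N : ℝ) - 2 < 2)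
    (a : EuclideanSpace ℝ (Fin N)) (ha : a ≠ 0)
    (k ψ φ : EuclideanSpace ℝ (Fin N) → ℝ)
    (M : ℝ) (hk : ∀ x, |k x| ≤ M) (hkm : Measurable k)
    (hψ : Continuous ψ) (hψpos : ∀ x : EuclideanSpace ℝ (Fin N), ‖x‖ = 1 → 0 < ψ x)
    (hφcont : ContinuousOn φ {(0 : EuclideanSpace ℝ (Fin N))}ᶜ)
    (C : ℝ) (hC : 0 < C)
    (hbound : ∀ x : EuclideanSpace ℝ (Fin N), x ≠ 0 →
      |φ x| ≤ C * (‖x‖ ^ σ / (1 + ‖x‖ ^ (2 * σ + (N : ℝ) - 2))))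
    (cinf : ℝ) (hcinf : 0 < cinf)
    (hlim : Tendsto
      (fun x : EuclideanSpace ℝ (Fin N) =>
        φ x / (‖x‖ ^ (-σ - (N : ℝ) + 2) * ψ (‖x‖⁻¹ • x)))
      (Filter.comap norm Filter.atTop) (𝓝 cinf)) :
    ∃ o : ℝ → ℝ, Tendsto o (𝓝[>] 0) (𝓝 0) ∧ ∀ μ : ℝ, 0 < μ →
      (∫ x, k (‖x - a‖⁻¹ • (x - a)) / ‖x - a‖ ^ 2
          * (μ ^ (-((N : ℝ) - 2) / 2) * φ (μ⁻¹ • x)) ^ 2)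
        = μ ^ (2 * σ + (N : ℝ) - 2) *
          (cinf ^ 2 *
            (∫ x, k (‖x‖⁻¹ • x) * (ψ (‖x + a‖⁻¹ • (x + a))) ^ 2
              / (‖x‖ ^ 2 * ‖x + a‖ ^ (2 * (σ + (N : ℝ) - 2))))
            + o μ) :=
  stmt9_general hN σ hσ1 hσ2 a ha k ψ φ M hk hkm hψpos hφcont C hC hbound cinf hlim
end

section
/- Let H = {x ∈ ℝ^N : x·d ≥ 0} for a unit vector d, σ(x) = x − 2(x·d)d the reflection, and for measurable nonnegative u define the polarization u_d(x) = max{u(x), u(σ(x))} for x ∈ H and min{u(x), u(σ(x))} for x ∉ H. Then for nonnegative measurable u, ∫_{ℝ^N} (x·d)/|x|³ · (u_d(x)² − u(x)²) dx ≥ 0, provided both integrals are absolutely convergent. -/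
/-!
Write `f(x) = (x·d) / ‖x‖³ · (u_d(x)² − u(x)²)`. The reflection `σ` in the hyperplane `d⊥` preserves
Lebesgue measure and the norm and reverses the sign of `x·d`, so `∫ f = ½ ∫ (f + f ∘ σ)`. On each pair
`{x, σ x}` the polarization puts the larger value of `u` on the side `x·d ≥ 0`, hence
`(x·d) ((u_d(x)² − u_d(σx)²) − (u(x)² − u(σx)²)) ≥ 0`, which is `f + f ∘ σ ≥ 0` up to the factor
`‖x‖⁻³`.
-/

open MeasureTheory
open scoped RealInnerProductSpace

theorem Submodule.reflection_orthogonal_singleton_of_norm_eq_one {E : Type*}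
    [NormedAddCommGroup E] [InnerProductSpace ℝ E] {d : E} (hd : ‖d‖ = 1) (x : E) :
    (ℝ ∙ d)ᗮ.reflection x = x - (2 * ⟪x, d⟫) • d := by
  rw [reflection_orthogonal_apply, reflection_singleton_apply, hd, real_inner_comm, mul_smul]
  simp [two_smul]

theorem Submodule.inner_reflection_orthogonal_singleton {E : Type*}
    [NormedAddCommGroup E] [InnerProductSpace ℝ E] (d x : E) :
    ⟪(ℝ ∙ d)ᗮ.reflection x, d⟫ = -⟪x, d⟫ := by
  calc ⟪(ℝ ∙ d)ᗮ.reflection x, d⟫ = -⟪(ℝ ∙ d)ᗮ.reflection x, (ℝ ∙ d)ᗮ.reflection d⟫ := by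
        rw [reflection_orthogonalComplement_singleton_eq_neg, inner_neg_right, neg_neg]
    _ = -⟪x, d⟫ := by rw [LinearIsometryEquiv.inner_map_map]

theorem integral_nonneg_of_nonneg_add_comp {α : Type*} [MeasurableSpace α] {μ : Measure α}
    {σ : α ≃ᵐ α} (hσ : MeasurePreserving σ μ μ) {f : α → ℝ} (hf : Integrable f μ)
    (h : ∀ x, 0 ≤ f x + f (σ x)) : 0 ≤ ∫ x, f x ∂μ := by
  have hfσ : Integrable (fun x => f (σ x)) μ :=
    (hσ.integrable_comp_emb σ.measurableEmbedding).mpr hf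
  have hsum : 0 ≤ ∫ x, f x ∂μ + ∫ x, f (σ x) ∂μ :=
    integral_add hf hfσ ▸ integral_nonneg h
  rw [hσ.integral_comp' f] at hsum
  linarith

noncomputable def polarize (t b c : ℝ) : ℝ := if 0 ≤ t then max b c else min b c

theorem sq_sub_sq_le_max_sq_sub_min_sq {b c : ℝ} (hb : 0 ≤ b) (hc : 0 ≤ c) :
    b ^ 2 - c ^ 2 ≤ max b c ^ 2 - min c b ^ 2 := by
  rcases le_total b c with h | h
  · rw [max_eq_right h, min_eq_right h]; nlinarith
  · rw [max_eq_left h, min_eq_left h]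

theorem mul_polarize_sq_sub_sq_nonneg (t : ℝ) {b c : ℝ} (hb : 0 ≤ b) (hc : 0 ≤ c) :
    0 ≤ t * ((polarize t b c ^ 2 - polarize (-t) c b ^ 2) - (b ^ 2 - c ^ 2)) := by
  rcases lt_trichotomy t 0 with ht | rfl | ht
  · have := sq_sub_sq_le_max_sq_sub_min_sq hc hb
    rw [polarize, polarize, if_neg ht.not_ge, if_pos (by linarith)]
    nlinarith
  · simp
  · have := sq_sub_sq_le_max_sq_sub_min_sq hb hc
    rw [polarize, polarize, if_pos ht.le, if_neg (by linarith)]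
    nlinarith

theorem stmt15_general {N : ℕ} (d : EuclideanSpace ℝ (Fin N)) (hd : ‖d‖ = 1)
    (u : EuclideanSpace ℝ (Fin N) → ℝ) (hpos : ∀ x, 0 ≤ u x)
    (pol : EuclideanSpace ℝ (Fin N) → ℝ)
    (hpol : ∀ x, pol x =
      if 0 ≤ ⟪x, d⟫ then max (u x) (u (x - (2 * ⟪x, d⟫) • d))
      else min (u x) (u (x - (2 * ⟪x, d⟫) • d)))
    (h1 : Integrable (fun x => ⟪x, d⟫ / ‖x‖ ^ 3 * (pol x) ^ 2))
    (h2 : Integrable (fun x => ⟪x, d⟫ / ‖x‖ ^ 3 * (u x) ^ 2)) :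
    0 ≤ ∫ x, ⟪x, d⟫ / ‖x‖ ^ 3 * ((pol x) ^ 2 - (u x) ^ 2) := by
  set σ := (ℝ ∙ d)ᗮ.reflection
  have hpolσ : ∀ x, pol x = polarize ⟪x, d⟫ (u x) (u (σ x)) := fun x => by
    rw [hpol, Submodule.reflection_orthogonal_singleton_of_norm_eq_one hd, polarize]
  have hf : Integrable fun x => ⟪x, d⟫ / ‖x‖ ^ 3 * ((pol x) ^ 2 - (u x) ^ 2) := by
    simp only [mul_sub]
    exact h1.sub h2
  refine integral_nonneg_of_nonneg_add_comp (σ := σ.toMeasurableEquiv) σ.measurePreserving hf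
    fun x => ?_
  have hσσ : σ (σ x) = x := Submodule.reflection_reflection _ x
  have hsum : ⟪x, d⟫ / ‖x‖ ^ 3 * ((pol x) ^ 2 - (u x) ^ 2)
      + ⟪σ x, d⟫ / ‖σ x‖ ^ 3 * ((pol (σ x)) ^ 2 - (u (σ x)) ^ 2)
      = (‖x‖ ^ 3)⁻¹ * (⟪x, d⟫ * ((polarize ⟪x, d⟫ (u x) (u (σ x)) ^ 2
          - polarize (-⟪x, d⟫) (u (σ x)) (u x) ^ 2) - (u x ^ 2 - u (σ x) ^ 2))) := by
    rw [hpolσ x, hpolσ (σ x), hσσ, Submodule.inner_reflection_orthogonal_singleton,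
      LinearIsometryEquiv.norm_map]
    ring
  exact hsum ▸ mul_nonneg (by positivity) (mul_polarize_sq_sub_sq_nonneg _ (hpos x) (hpos (σ x)))

theorem stmt15 {N : ℕ} (hN : 3 ≤ N) (d : EuclideanSpace ℝ (Fin N)) (hd : ‖d‖ = 1)
    (u : EuclideanSpace ℝ (Fin N) → ℝ) (hmeas : Measurable u) (hpos : ∀ x, 0 ≤ u x)
    (pol : EuclideanSpace ℝ (Fin N) → ℝ)
    (hpol : ∀ x, pol x =
      if 0 ≤ ⟪x, d⟫ then max (u x) (u (x - (2 * ⟪x, d⟫) • d))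
      else min (u x) (u (x - (2 * ⟪x, d⟫) • d)))
    (h1 : Integrable (fun x => ⟪x, d⟫ / ‖x‖ ^ 3 * (pol x) ^ 2))
    (h2 : Integrable (fun x => ⟪x, d⟫ / ‖x‖ ^ 3 * (u x) ^ 2)) :
    0 ≤ ∫ x, ⟪x, d⟫ / ‖x‖ ^ 3 * ((pol x) ^ 2 - (u x) ^ 2) :=
  stmt15_general d hd u hpos pol hpol h1 h2
end
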